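/- arXiv:2311.17711 — 8 statements merged into one kernel-verified Lean document; each statement's English description precedes it below -/
import Mathlib

section
/- Under the assumptions ρ > 2(r-g) + σ² and c₂ > 0, the threshold ā := (1-δ₂)c₂(ρ - 2(r-g) - σ²)/(2-δ₂) is strictly positive and strictly smaller than ã := c₂(ρ - (r-g)), where δ₂ < 0 is the negative root of (1/2)σ²δ(δ-1) + (r-g)δ - ρ = 0. -/
/-- Under ρ > 2(r-g)+σ² and c₂ > 0, the threshold
ā := (1-δ₂)c₂(ρ-2(r-g)-σ²)/(2-δ₂) is strictly positive and strictly smaller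
than ã := c₂(ρ-(r-g)), where δ₂ < 0 is the negative root of the characteristic
quadratic. -/
theorem stmt_2 (σ r g ρ c₂ δ₂ : ℝ) (hσ : 0 < σ) (hρ0 : 0 < ρ)
    (hρ : ρ > 2 * (r - g) + σ ^ 2) (hc₂ : 0 < c₂) (hδ₂ : δ₂ < 0)
    (hroot : (1/2) * σ ^ 2 * δ₂ * (δ₂ - 1) + (r - g) * δ₂ - ρ = 0) :
    0 < (1 - δ₂) * c₂ * (ρ - 2 * (r - g) - σ ^ 2) / (2 - δ₂) ∧
    (1 - δ₂) * c₂ * (ρ - 2 * (r - g) - σ ^ 2) / (2 - δ₂) < c₂ * (ρ - (r - g)) := by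
  have h2 : (0:ℝ) < 2 - δ₂ := by linarith
  constructor
  · apply div_pos
    · exact mul_pos (mul_pos (by linarith : (0:ℝ) < 1 - δ₂) hc₂) (by linarith)
    · exact h2
  · rw [div_lt_iff₀ h2]
    have hσ2 : 0 < σ ^ 2 := by positivity
    nlinarith [mul_pos hσ2 (mul_pos (by linarith : (0:ℝ) < 1 - δ₂) (by linarith : (0:ℝ) < 2 - δ₂)), hc₂.le, mul_pos hc₂ hσ2]
end

section
/- With F(a,b) as defined and ã := c₂(ρ-(r-g)), the partial derivative of F in a satisfies: ∂F/∂a(a,b) = a^{-1}[(b/a)^{δ₁-1} - (b/a)^{δ₂-1}]·[c₂(δ₁-1)(1-δ₂)(ρ-2(r-g)-σ²) - (δ₁-2)(2-δ₂)a] for 0 < a < b; in particular ∂F/∂a(a,b) > 0 for 0 < a < min(ã, b), ∂F/∂a(a,b) < 0 for min(ã,b) < a < b, and ∂F/∂a(b,b) = 0 in the sense of the one-sided limit a ↑ b. Here one uses the identity c₂(δ₁-1)(1-δ₂)(ρ-2(r-g)-σ²) = (δ₁-2)(2-δ₂)ã. -/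
open Real Filter Set

noncomputable def F (σ r g ρ c₁ c₂ δ₁ δ₂ a b : ℝ) : ℝ :=
  ((2 - δ₂) * a - c₂ * (1 - δ₂) * (ρ - 2 * (r - g) - σ ^ 2)) * (b / a) ^ (δ₁ - 1)
  + ((δ₁ - 2) * a - c₂ * (δ₁ - 1) * (ρ - 2 * (r - g) - σ ^ 2)) * (b / a) ^ (δ₂ - 1)
  - (δ₁ - δ₂) * (b - c₁ * (ρ - 2 * (r - g) - σ ^ 2))

/-- The partial derivative ∂F/∂a. -/
noncomputable def Fa (σ r g ρ c₂ δ₁ δ₂ a b : ℝ) : ℝ :=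
  a⁻¹ * ((b / a) ^ (δ₁ - 1) - (b / a) ^ (δ₂ - 1)) *
    (c₂ * (δ₁ - 1) * (1 - δ₂) * (ρ - 2 * (r - g) - σ ^ 2) - (δ₁ - 2) * (2 - δ₂) * a)

/-- the formula and sign properties of ∂F/∂a, together with the
identity c₂(δ₁-1)(1-δ₂)(ρ-2(r-g)-σ²) = (δ₁-2)(2-δ₂)ã where ã = c₂(ρ-(r-g)),
and the one-sided limit ∂F/∂a(a,b) → 0 as a ↑ b. -/
theorem stmt_5 (σ r g ρ c₁ c₂ δ₁ δ₂ b : ℝ) (hσ : 0 < σ)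
    (hρ : ρ > 2 * (r - g) + σ ^ 2) (hc₂ : 0 < c₂) (hc : c₂ < c₁)
    (hδ₁ : δ₁ > 2) (hδ₂ : δ₂ < 0)
    (hroot₁ : (1/2) * σ ^ 2 * δ₁ * (δ₁ - 1) + (r - g) * δ₁ - ρ = 0)
    (hroot₂ : (1/2) * σ ^ 2 * δ₂ * (δ₂ - 1) + (r - g) * δ₂ - ρ = 0)
    (hb : 0 < b) :
    c₂ * (δ₁ - 1) * (1 - δ₂) * (ρ - 2 * (r - g) - σ ^ 2)
      = (δ₁ - 2) * (2 - δ₂) * (c₂ * (ρ - (r - g))) ∧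
    (∀ a ∈ Ioo 0 b,
      HasDerivAt (fun a' => F σ r g ρ c₁ c₂ δ₁ δ₂ a' b) (Fa σ r g ρ c₂ δ₁ δ₂ a b) a) ∧
    (∀ a, 0 < a → a < min (c₂ * (ρ - (r - g))) b → 0 < Fa σ r g ρ c₂ δ₁ δ₂ a b) ∧
    (∀ a, min (c₂ * (ρ - (r - g))) b < a → a < b → Fa σ r g ρ c₂ δ₁ δ₂ a b < 0) ∧
    Tendsto (fun a => Fa σ r g ρ c₂ δ₁ δ₂ a b) (nhdsWithin b (Iio b)) (nhds 0) := by
  have hs : (0:ℝ) < σ ^ 2 := by positivity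
  have hδd : (0:ℝ) < δ₁ - δ₂ := by linarith
  have hm : r - g = σ ^ 2 * (1 - δ₁ - δ₂) / 2 := by
    have key : (δ₁ - δ₂) * ((r - g) - σ ^ 2 * (1 - δ₁ - δ₂) / 2) = 0 := by
      linear_combination hroot₁ - hroot₂
    rcases mul_eq_zero.mp key with h | h
    · linarith
    · linarith
  have hρe : ρ = -(σ ^ 2 * δ₁ * δ₂) / 2 := by
    linear_combination (-1 : ℝ) * hroot₁ + δ₁ * hm
  have hK : ρ - 2 * (r - g) - σ ^ 2 = σ ^ 2 * (δ₁ - 2) * (2 - δ₂) / 2 := by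
    rw [hρe, hm]; ring
  have hA : ρ - (r - g) = σ ^ 2 * (δ₁ - 1) * (1 - δ₂) / 2 := by
    rw [hρe, hm]; ring
  have hident : c₂ * (δ₁ - 1) * (1 - δ₂) * (ρ - 2 * (r - g) - σ ^ 2)
      = (δ₁ - 2) * (2 - δ₂) * (c₂ * (ρ - (r - g))) := by
    rw [hK, hA]; ring
  have hKpos : 0 < ρ - 2 * (r - g) - σ ^ 2 := by linarith
  have hApos : 0 < c₂ * (ρ - (r - g)) := by
    rw [hA]
    have h1 : (0:ℝ) < δ₁ - 1 := by linarith
    have h2 : (0:ℝ) < 1 - δ₂ := by linarith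
    have := mul_pos (mul_pos hs h1) h2
    nlinarith
  refine ⟨hident, ?_, ?_, ?_, ?_⟩
  · -- derivative
    rintro a ⟨ha0, hab⟩
    have hane : a ≠ 0 := ne_of_gt ha0
    have hba : 0 < b / a := div_pos hb ha0
    have hraw : HasDerivAt (fun a' : ℝ => b / a') (b * -(a ^ 2)⁻¹) a := by
      simpa [div_eq_mul_inv] using (hasDerivAt_inv hane).const_mul b
    have h1 : HasDerivAt (fun a' : ℝ => (b / a') ^ (δ₁ - 1))
        (b * -(a ^ 2)⁻¹ * (δ₁ - 1) * (b / a) ^ (δ₁ - 1 - 1)) a :=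
      hraw.rpow_const (Or.inl hba.ne')
    have h2 : HasDerivAt (fun a' : ℝ => (b / a') ^ (δ₂ - 1))
        (b * -(a ^ 2)⁻¹ * (δ₂ - 1) * (b / a) ^ (δ₂ - 1 - 1)) a :=
      hraw.rpow_const (Or.inl hba.ne')
    have lin₁ : HasDerivAt (fun a' : ℝ =>
        (2 - δ₂) * a' - c₂ * (1 - δ₂) * (ρ - 2 * (r - g) - σ ^ 2)) (2 - δ₂) a := by
      simpa using ((hasDerivAt_id a).const_mul (2 - δ₂)).sub_const
        (c₂ * (1 - δ₂) * (ρ - 2 * (r - g) - σ ^ 2))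
    have lin₂ : HasDerivAt (fun a' : ℝ =>
        (δ₁ - 2) * a' - c₂ * (δ₁ - 1) * (ρ - 2 * (r - g) - σ ^ 2)) (δ₁ - 2) a := by
      simpa using ((hasDerivAt_id a).const_mul (δ₁ - 2)).sub_const
        (c₂ * (δ₁ - 1) * (ρ - 2 * (r - g) - σ ^ 2))
    have total := ((lin₁.mul h1).add (lin₂.mul h2)).sub_const
      ((δ₁ - δ₂) * (b - c₁ * (ρ - 2 * (r - g) - σ ^ 2)))
    have heq : Fa σ r g ρ c₂ δ₁ δ₂ a b =
        ((2 - δ₂) * (b / a) ^ (δ₁ - 1) +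
          ((2 - δ₂) * a - c₂ * (1 - δ₂) * (ρ - 2 * (r - g) - σ ^ 2)) *
            (b * -(a ^ 2)⁻¹ * (δ₁ - 1) * (b / a) ^ (δ₁ - 1 - 1)) +
        ((δ₁ - 2) * (b / a) ^ (δ₂ - 1) +
          ((δ₁ - 2) * a - c₂ * (δ₁ - 1) * (ρ - 2 * (r - g) - σ ^ 2)) *
            (b * -(a ^ 2)⁻¹ * (δ₂ - 1) * (b / a) ^ (δ₂ - 1 - 1)))) := by
      have e1 : (b / a) ^ (δ₁ - 1 - 1) = (b / a) ^ (δ₁ - 1) * (a / b) := by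
        rw [Real.rpow_sub hba, Real.rpow_one, div_eq_mul_inv, inv_div]
      have e2 : (b / a) ^ (δ₂ - 1 - 1) = (b / a) ^ (δ₂ - 1) * (a / b) := by
        rw [Real.rpow_sub hba, Real.rpow_one, div_eq_mul_inv, inv_div]
      rw [Fa, e1, e2]
      field_simp
      ring
    rw [heq]
    exact total
  · -- positivity
    intro a ha0 hlt
    obtain ⟨hlt₁, hltb⟩ := lt_min_iff.mp hlt
    have hba1 : 1 < b / a := (one_lt_div ha0).mpr hltb
    have hXY : (b / a) ^ (δ₂ - 1) < (b / a) ^ (δ₁ - 1) :=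
      (Real.rpow_lt_rpow_left_iff hba1).mpr (by linarith)
    have hfac : 0 < c₂ * (δ₁ - 1) * (1 - δ₂) * (ρ - 2 * (r - g) - σ ^ 2)
        - (δ₁ - 2) * (2 - δ₂) * a := by
      rw [hident]
      have h22 : 0 < (δ₁ - 2) * (2 - δ₂) :=
        mul_pos (by linarith) (by linarith)
      have := mul_lt_mul_of_pos_left hlt₁ h22
      linarith
    exact mul_pos (mul_pos (inv_pos.mpr ha0) (sub_pos.mpr hXY)) hfac
  · -- negativity
    intro a h1 h2
    have ha0 : 0 < a := lt_trans (lt_min_iff.mpr ⟨hApos, hb⟩) h1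
    have hta : c₂ * (ρ - (r - g)) < a := by
      rcases le_or_gt (c₂ * (ρ - (r - g))) b with h | h
      · rwa [min_eq_left h] at h1
      · rw [min_eq_right h.le] at h1; linarith
    have hba1 : 1 < b / a := (one_lt_div ha0).mpr h2
    have hXY : (b / a) ^ (δ₂ - 1) < (b / a) ^ (δ₁ - 1) :=
      (Real.rpow_lt_rpow_left_iff hba1).mpr (by linarith)
    have hfac : c₂ * (δ₁ - 1) * (1 - δ₂) * (ρ - 2 * (r - g) - σ ^ 2)
        - (δ₁ - 2) * (2 - δ₂) * a < 0 := by
      rw [hident]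
      have h22 : 0 < (δ₁ - 2) * (2 - δ₂) :=
        mul_pos (by linarith) (by linarith)
      have := mul_lt_mul_of_pos_left hta h22
      linarith
    exact mul_neg_of_pos_of_neg
      (mul_pos (inv_pos.mpr ha0) (sub_pos.mpr hXY)) hfac
  · -- limit
    have hbb : b / b ≠ 0 := by rw [div_self hb.ne']; norm_num
    have hq : ContinuousAt (fun a : ℝ => b / a) b :=
      continuousAt_const.div continuousAt_id hb.ne'
    have hX : ContinuousAt (fun a : ℝ => (b / a) ^ (δ₁ - 1)) b :=
      (Real.continuousAt_rpow_const _ _ (Or.inl hbb)).comp hq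
    have hY : ContinuousAt (fun a : ℝ => (b / a) ^ (δ₂ - 1)) b :=
      (Real.continuousAt_rpow_const _ _ (Or.inl hbb)).comp hq
    have hcont : ContinuousAt (fun a : ℝ => Fa σ r g ρ c₂ δ₁ δ₂ a b) b := by
      unfold Fa
      exact ((continuousAt_id.inv₀ hb.ne').mul (hX.sub hY)).mul
        (continuousAt_const.sub (continuousAt_const.mul continuousAt_id))
    have h0 : Fa σ r g ρ c₂ δ₁ δ₂ b b = 0 := by
      unfold Fa
      rw [div_self hb.ne']
      simp
    have := hcont.tendsto.mono_left (nhdsWithin_le_nhds (s := Iio b))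
    rwa [h0] at this
end

section
/- For every b > 0 there exists a unique a(b) ∈ (0, b) such that F(a(b), b) = 0; moreover a(b) < ã := c₂(ρ-(r-g)) and ∂F/∂a(a(b), b) > 0. -/
/-!
By Vieta, `ρ - 2(r-g) - σ² = σ²/2 (δ₁-2)(2-δ₂)` and `ρ - (r-g) = σ²/2 (δ₁-1)(1-δ₂)`, which turns the
derivative into `∂F/∂a = ((b/a)^(δ₁-1) - (b/a)^(δ₂-1)) (δ₁-2)(2-δ₂) (ã - a) / a`, whose first factor
is positive for `0 < a < b`. Hence `F(·, b)` increases on `(0, min ã b]` and decreases on `[ã, b]`.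
As `F(a, b) → -∞` for `a → 0+` and `F(b, b) = (δ₁-δ₂)(ρ-2(r-g)-σ²)(c₁-c₂) > 0`, the only zero of
`F(·, b)` on `(0, b)` lies in the increasing part, below `ã` and with positive derivative.
-/

open Real Set

open Filter Topology

theorem exists_unique_zero_of_strictMonoOn_of_antitoneOn {f : ℝ → ℝ} {l m b : ℝ}
    (hlm : l < m) (hmb : m ≤ b) (hcont : ContinuousOn f (Ioc l m))
    (hmono : StrictMonoOn f (Ioc l m)) (hanti : AntitoneOn f (Icc m b))
    (hbot : Tendsto f (𝓝[>] l) atBot) (hfb : 0 < f b) :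
    ∃ a ∈ Ioo l m, f a = 0 ∧ ∀ a' ∈ Ioo l b, f a' = 0 → a' = a := by
  have hfm : 0 < f m := hfb.trans_le (hanti ⟨le_rfl, hmb⟩ ⟨hmb, le_rfl⟩ hmb)
  obtain ⟨q, hfq, hq⟩ : ∃ q, f q < 0 ∧ q ∈ Ioo l m :=
    ((hbot.eventually (eventually_lt_atBot 0)).and (Ioo_mem_nhdsGT hlm)).exists
  obtain ⟨a, ⟨hqa, ham⟩, hfa⟩ := intermediate_value_Ioo hq.2.le
    (hcont.mono (Icc_subset_Ioc hq.1 le_rfl)) ⟨hfq, hfm⟩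
  have hal : l < a := hq.1.trans hqa
  refine ⟨a, ⟨hal, ham⟩, hfa, fun a' ⟨hla', ha'b⟩ hfa' => ?_⟩
  have ha'm : a' ≤ m := by
    by_contra! hma'
    have := hanti ⟨hma'.le, ha'b.le⟩ ⟨hmb, le_rfl⟩ ha'b.le
    linarith
  exact hmono.injOn ⟨hla', ha'm⟩ ⟨hal, ham.le⟩ (hfa'.trans hfa.symm)

section F

variable {σ r g ρ c₁ c₂ δ₁ δ₂ a b : ℝ}

theorem vieta_of_roots (hδ : δ₁ ≠ δ₂)
    (h₁ : (1/2) * σ ^ 2 * δ₁ * (δ₁ - 1) + (r - g) * δ₁ - ρ = 0)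
    (h₂ : (1/2) * σ ^ 2 * δ₂ * (δ₂ - 1) + (r - g) * δ₂ - ρ = 0) :
    r - g = σ ^ 2 / 2 * (1 - δ₁ - δ₂) ∧ ρ = -(σ ^ 2 / 2) * (δ₁ * δ₂) := by
  have hr : r - g = σ ^ 2 / 2 * (1 - δ₁ - δ₂) := by
    have : (δ₁ - δ₂) * (r - g - σ ^ 2 / 2 * (1 - δ₁ - δ₂)) = 0 := by
      linear_combination h₁ - h₂
    linarith [(mul_eq_zero.1 this).resolve_left (sub_ne_zero.2 hδ)]
  exact ⟨hr, by linear_combination -h₁ + δ₁ * hr⟩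

theorem rho_sub_drift_pos (hK : 0 < ρ - 2 * (r - g) - σ ^ 2) (hδ₁ : 2 < δ₁) (hδ₂ : δ₂ < 1)
    (hsum : r - g = σ ^ 2 / 2 * (1 - δ₁ - δ₂)) (hprod : ρ = -(σ ^ 2 / 2) * (δ₁ * δ₂)) :
    0 < ρ - (r - g) := by
  have hscale : (δ₁ - 2) * (2 - δ₂) * (ρ - (r - g)) =
      (δ₁ - 1) * (1 - δ₂) * (ρ - 2 * (r - g) - σ ^ 2) := by
    rw [hprod, hsum]
    ring
  have hmul : 0 < (δ₁ - 2) * (2 - δ₂) * (ρ - (r - g)) := by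
    rw [hscale]
    exact mul_pos (mul_pos (by linarith) (by linarith)) hK
  exact pos_of_mul_pos_right hmul (mul_pos (by linarith) (by linarith)).le

theorem F_self_pos (hb : b ≠ 0) (hK : 0 < ρ - 2 * (r - g) - σ ^ 2) (hδ : δ₂ < δ₁) (hc : c₂ < c₁) :
    0 < F σ r g ρ c₁ c₂ δ₁ δ₂ b b := by
  have hself : F σ r g ρ c₁ c₂ δ₁ δ₂ b b = (δ₁ - δ₂) * (ρ - 2 * (r - g) - σ ^ 2) * (c₁ - c₂) := by
    simp only [F, div_self hb, one_rpow]
    ring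
  rw [hself]
  exact mul_pos (mul_pos (sub_pos.2 hδ) hK) (sub_pos.2 hc)

theorem hasDerivAt_F (hb : 0 < b) (ha : 0 < a) :
    HasDerivAt (fun x => F σ r g ρ c₁ c₂ δ₁ δ₂ x b)
      (((b / a) ^ (δ₁ - 1) - (b / a) ^ (δ₂ - 1)) / a *
        (c₂ * (δ₁ - 1) * (1 - δ₂) * (ρ - 2 * (r - g) - σ ^ 2) - (δ₁ - 2) * (2 - δ₂) * a)) a := by
  have hba : 0 < b / a := div_pos hb ha
  have hquot : HasDerivAt (fun x => b / x) (-(b / a ^ 2)) a := by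
    simpa [div_eq_mul_inv] using (hasDerivAt_inv ha.ne').const_mul b
  have hpow (p : ℝ) : HasDerivAt (fun x => (b / x) ^ p) (-(p / a) * (b / a) ^ p) a := by
    convert hquot.rpow_const (p := p) (Or.inl hba.ne') using 1
    rw [rpow_sub hba, rpow_one, div_div_eq_mul_div]
    field_simp
  have hlin (u v : ℝ) : HasDerivAt (fun x => u * x - v) u a := by
    simpa using ((hasDerivAt_id a).const_mul u).sub_const v
  set K := ρ - 2 * (r - g) - σ ^ 2
  refine ((((hlin (2 - δ₂) (c₂ * (1 - δ₂) * K)).mul (hpow (δ₁ - 1))).add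
    ((hlin (δ₁ - 2) (c₂ * (δ₁ - 1) * K)).mul (hpow (δ₂ - 1)))).sub_const
      ((δ₁ - δ₂) * (b - c₁ * K))).congr_deriv ?_
  field_simp
  ring

theorem continuousOn_F (hb : 0 < b) :
    ContinuousOn (fun x => F σ r g ρ c₁ c₂ δ₁ δ₂ x b) (Ioi 0) :=
  fun _ ha => (hasDerivAt_F hb ha).continuousAt.continuousWithinAt

theorem tendsto_F_atBot (hb : 0 < b) (hc₂ : 0 < c₂) (hK : 0 < ρ - 2 * (r - g) - σ ^ 2)
    (hδ₁ : 1 < δ₁) (hδ₂ : δ₂ < 1) :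
    Tendsto (fun x => F σ r g ρ c₁ c₂ δ₁ δ₂ x b) (𝓝[>] 0) atBot := by
  have hquot : Tendsto (fun x => b / x) (𝓝[>] 0) atTop := by
    simpa [div_eq_mul_inv] using tendsto_inv_nhdsGT_zero.const_mul_atTop hb
  have hlin (u v : ℝ) : Tendsto (fun x => u * x - v) (𝓝[>] 0) (𝓝 (-v)) :=
    (((continuous_const_mul u).sub continuous_const).tendsto' 0 (-v) (by simp)).mono_left
      nhdsWithin_le_nhds
  have hX : Tendsto (fun x => (b / x) ^ (δ₁ - 1)) (𝓝[>] 0) atTop :=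
    (tendsto_rpow_atTop (by linarith)).comp hquot
  have hY : Tendsto (fun x => (b / x) ^ (δ₂ - 1)) (𝓝[>] 0) (𝓝 0) := by
    rw [show δ₂ - 1 = -(1 - δ₂) by ring]
    exact (tendsto_rpow_neg_atTop (y := 1 - δ₂) (by linarith)).comp hquot
  have hcoef : -(c₂ * (1 - δ₂) * (ρ - 2 * (r - g) - σ ^ 2)) < 0 :=
    neg_neg_of_pos (mul_pos (mul_pos hc₂ (by linarith)) hK)
  exact (((hlin (2 - δ₂) _).neg_mul_atTop hcoef hX).atBot_add
    (((hlin (δ₁ - 2) (c₂ * (δ₁ - 1) * (ρ - 2 * (r - g) - σ ^ 2))).mul hY).sub_const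
      ((δ₁ - δ₂) * (b - c₁ * (ρ - 2 * (r - g) - σ ^ 2))))).congr fun x => by
    simp only [F]
    ring

theorem exists_pos_hasDerivAt_F (hδ₁ : 2 < δ₁) (hδ₂ : δ₂ < 2)
    (hsum : r - g = σ ^ 2 / 2 * (1 - δ₁ - δ₂)) (hprod : ρ = -(σ ^ 2 / 2) * (δ₁ * δ₂))
    (ha : a ∈ Ioo 0 b) :
    ∃ w > 0, HasDerivAt (fun x => F σ r g ρ c₁ c₂ δ₁ δ₂ x b) (w * (c₂ * (ρ - (r - g)) - a)) a := by
  obtain ⟨ha0, hab⟩ := ha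
  refine ⟨((b / a) ^ (δ₁ - 1) - (b / a) ^ (δ₂ - 1)) / a * ((δ₁ - 2) * (2 - δ₂)), ?_,
    (hasDerivAt_F (ha0.trans hab) ha0).congr_deriv ?_⟩
  · have hpow : (b / a) ^ (δ₂ - 1) < (b / a) ^ (δ₁ - 1) :=
      rpow_lt_rpow_of_exponent_lt ((one_lt_div ha0).2 hab) (by linarith)
    exact mul_pos (div_pos (sub_pos.2 hpow) ha0) (mul_pos (by linarith) (by linarith))
  · rw [hprod, hsum]
    ring

theorem strictMonoOn_F (hb : 0 < b) (hδ₁ : 2 < δ₁) (hδ₂ : δ₂ < 2)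
    (hsum : r - g = σ ^ 2 / 2 * (1 - δ₁ - δ₂)) (hprod : ρ = -(σ ^ 2 / 2) * (δ₁ * δ₂)) :
    StrictMonoOn (fun x => F σ r g ρ c₁ c₂ δ₁ δ₂ x b) (Ioc 0 (min (c₂ * (ρ - (r - g))) b)) := by
  refine strictMonoOn_of_deriv_pos (convex_Ioc _ _) ((continuousOn_F hb).mono Ioc_subset_Ioi_self)
    fun x hx => ?_
  rw [interior_Ioc, mem_Ioo, lt_min_iff] at hx
  obtain ⟨w, hw, hderiv⟩ := exists_pos_hasDerivAt_F hδ₁ hδ₂ hsum hprod ⟨hx.1, hx.2.2⟩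
  rw [hderiv.deriv]
  exact mul_pos hw (sub_pos.2 hx.2.1)

theorem antitoneOn_F (hb : 0 < b) (hã : 0 < c₂ * (ρ - (r - g))) (hδ₁ : 2 < δ₁) (hδ₂ : δ₂ < 2)
    (hsum : r - g = σ ^ 2 / 2 * (1 - δ₁ - δ₂)) (hprod : ρ = -(σ ^ 2 / 2) * (δ₁ * δ₂)) :
    AntitoneOn (fun x => F σ r g ρ c₁ c₂ δ₁ δ₂ x b) (Icc (min (c₂ * (ρ - (r - g))) b) b) := by
  refine (strictAntiOn_of_deriv_neg (convex_Icc _ _)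
    ((continuousOn_F hb).mono fun x hx => (lt_min hã hb).trans_le hx.1) fun x hx => ?_).antitoneOn
  rw [interior_Icc] at hx
  have hãx : c₂ * (ρ - (r - g)) < x :=
    (min_lt_iff.1 hx.1).resolve_right hx.2.not_gt
  obtain ⟨w, hw, hderiv⟩ :=
    exists_pos_hasDerivAt_F hδ₁ hδ₂ hsum hprod ⟨(lt_min hã hb).trans hx.1, hx.2⟩
  rw [hderiv.deriv]
  exact mul_neg_of_pos_of_neg hw (sub_neg.2 hãx)

end F

theorem stmt_6_general (σ r g ρ c₁ c₂ δ₁ δ₂ b : ℝ)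
    (hρ : ρ > 2 * (r - g) + σ ^ 2) (hc₂ : 0 < c₂) (hc : c₂ < c₁)
    (hδ₁ : δ₁ > 2) (hδ₂ : δ₂ < 0)
    (hroot₁ : (1/2) * σ ^ 2 * δ₁ * (δ₁ - 1) + (r - g) * δ₁ - ρ = 0)
    (hroot₂ : (1/2) * σ ^ 2 * δ₂ * (δ₂ - 1) + (r - g) * δ₂ - ρ = 0)
    (hb : 0 < b) :
    ∃ a, a ∈ Ioo 0 b ∧ F σ r g ρ c₁ c₂ δ₁ δ₂ a b = 0 ∧
      (∀ a' ∈ Ioo 0 b, F σ r g ρ c₁ c₂ δ₁ δ₂ a' b = 0 → a' = a) ∧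
      a < c₂ * (ρ - (r - g)) ∧
      0 < deriv (fun a' => F σ r g ρ c₁ c₂ δ₁ δ₂ a' b) a := by
  have hK : 0 < ρ - 2 * (r - g) - σ ^ 2 := by linarith
  have hδ₂_lt_two : δ₂ < 2 := by linarith
  obtain ⟨hsum, hprod⟩ := vieta_of_roots (by linarith : δ₁ ≠ δ₂) hroot₁ hroot₂
  have hã : 0 < c₂ * (ρ - (r - g)) := mul_pos hc₂ (rho_sub_drift_pos hK hδ₁ (by linarith) hsum hprod)
  obtain ⟨a, ⟨ha0, ham⟩, hfa, huniq⟩ := exists_unique_zero_of_strictMonoOn_of_antitoneOn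
    (lt_min hã hb) (min_le_right _ _) ((continuousOn_F hb).mono Ioc_subset_Ioi_self)
    (strictMonoOn_F hb hδ₁ hδ₂_lt_two hsum hprod) (antitoneOn_F hb hã hδ₁ hδ₂_lt_two hsum hprod)
    (tendsto_F_atBot hb hc₂ hK (by linarith) (by linarith))
    (F_self_pos hb.ne' hK (by linarith) hc)
  have hab := ham.trans_le (min_le_right _ _)
  have haã := ham.trans_le (min_le_left _ _)
  obtain ⟨w, hw, hderiv⟩ := exists_pos_hasDerivAt_F hδ₁ hδ₂_lt_two hsum hprod ⟨ha0, hab⟩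
  exact ⟨a, ⟨ha0, hab⟩, hfa, huniq, haã, hderiv.deriv ▸ mul_pos hw (sub_pos.2 haã)⟩

/-- for every b > 0 there is a unique a(b) ∈ (0,b) with F(a(b),b) = 0;
moreover a(b) < ã := c₂(ρ-(r-g)) and ∂F/∂a(a(b),b) > 0. -/
theorem stmt_6 (σ r g ρ c₁ c₂ δ₁ δ₂ b : ℝ) (hσ : 0 < σ)
    (hρ : ρ > 2 * (r - g) + σ ^ 2) (hc₂ : 0 < c₂) (hc : c₂ < c₁)
    (hδ₁ : δ₁ > 2) (hδ₂ : δ₂ < 0)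
    (hroot₁ : (1/2) * σ ^ 2 * δ₁ * (δ₁ - 1) + (r - g) * δ₁ - ρ = 0)
    (hroot₂ : (1/2) * σ ^ 2 * δ₂ * (δ₂ - 1) + (r - g) * δ₂ - ρ = 0)
    (hb : 0 < b) :
    ∃ a, a ∈ Ioo 0 b ∧ F σ r g ρ c₁ c₂ δ₁ δ₂ a b = 0 ∧
      (∀ a' ∈ Ioo 0 b, F σ r g ρ c₁ c₂ δ₁ δ₂ a' b = 0 → a' = a) ∧
      a < c₂ * (ρ - (r - g)) ∧
      0 < deriv (fun a' => F σ r g ρ c₁ c₂ δ₁ δ₂ a' b) a :=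
  stmt_6_general σ r g ρ c₁ c₂ δ₁ δ₂ b hρ hc₂ hc hδ₁ hδ₂ hroot₁ hroot₂ hb
end

section
/- Define G(a,b) for 0 < a < b with b > m > a or other configurations as in the model. Then G(a,a) = κ > 0 and lim_{b→∞} G(a,b) = -∞, provided λ < r - g + α/κ. -/
open Real Filter

/-- The function G from the legislative body's free-boundary problem. -/
noncomputable def G (r g lam α κ m θ₁ θ₂ a b : ℝ) : ℝ :=
  ((θ₁ - 1) * (b / a) ^ (1 - θ₂) + (1 - θ₂) * (b / a) ^ (1 - θ₁)) *
    (κ / (θ₁ - θ₂) - (if m ≤ b then α else 0) / ((θ₁ - θ₂) * (lam - (r - g))))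
  + (α / ((θ₁ - θ₂) * (lam - (r - g)))) *
      ((1 - θ₂) * (m / a) ^ (1 - θ₁) + (θ₁ - 1) * (m / a) ^ (1 - θ₂)) *
      (if a < m ∧ m < b then 1 else 0)
  + (α / (lam - (r - g))) * (if m ≤ a then 1 else 0)

/-! At `b = a` the power terms collapse to `θ₁ - θ₂` and the two indicator terms cancel.
Once `b > m`, `G a b = Φ (b / a) * C + D` with `D` independent of `b`,
`Φ x = (θ₁ - 1) x ^ (1 - θ₂) + (1 - θ₂) x ^ (1 - θ₁) → ∞`, and
`C = (κ (λ - (r - g)) - α) / ((θ₁ - θ₂) (λ - (r - g)))`, which is negative exactly when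
`λ < r - g + α / κ`. -/

theorem tendsto_const_mul_rpow_add_const_mul_rpow_atTop {c p q : ℝ} (d : ℝ) (hc : 0 < c)
    (hp : 0 < p) (hq : q < 0) :
    Tendsto (fun x : ℝ => c * x ^ p + d * x ^ q) atTop atTop := by
  have h_small : Tendsto (fun x : ℝ => d * x ^ q) atTop (nhds 0) := by
    simpa using (tendsto_rpow_neg_atTop (neg_pos.mpr hq)).const_mul d
  exact tendsto_atTop_add_right_of_le' _ (-1)
    ((tendsto_rpow_atTop hp).const_mul_atTop hc)
    (h_small.eventually (eventually_ge_nhds (by norm_num)))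

theorem G_self (r g lam α κ m : ℝ) {θ₁ θ₂ a : ℝ} (ha : a ≠ 0) (hθ : θ₁ ≠ θ₂) :
    G r g lam α κ m θ₁ θ₂ a a = κ := by
  have hθ' : θ₁ - θ₂ ≠ 0 := sub_ne_zero.mpr hθ
  have h_empty : ¬ (a < m ∧ m < a) := fun h => h.1.not_gt h.2
  unfold G
  rw [div_self ha, one_rpow, one_rpow, if_neg h_empty]
  split_ifs <;> field_simp <;> ring

theorem exists_G_eq_of_lt (r g lam α κ m θ₁ θ₂ a : ℝ) :
    ∃ D, ∀ b, m < b → G r g lam α κ m θ₁ θ₂ a b =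
      ((θ₁ - 1) * (b / a) ^ (1 - θ₂) + (1 - θ₂) * (b / a) ^ (1 - θ₁)) *
        (κ / (θ₁ - θ₂) - α / ((θ₁ - θ₂) * (lam - (r - g)))) + D := by
  refine ⟨(α / ((θ₁ - θ₂) * (lam - (r - g)))) *
      ((1 - θ₂) * (m / a) ^ (1 - θ₁) + (θ₁ - 1) * (m / a) ^ (1 - θ₂)) *
      (if a < m then 1 else 0)
    + (α / (lam - (r - g))) * (if m ≤ a then 1 else 0), fun b hb => ?_⟩
  have h_iff : a < m ∧ m < b ↔ a < m := and_iff_left hb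
  unfold G
  rw [if_pos hb.le]
  simp only [h_iff]
  ring

theorem div_sub_div_mul_neg_of_mul_lt {κ α d ℓ : ℝ} (hd : 0 < d) (hℓ : 0 < ℓ) (h : κ * ℓ < α) :
    κ / d - α / (d * ℓ) < 0 := by
  rw [show κ / d - α / (d * ℓ) = (κ * ℓ - α) / (d * ℓ) by field_simp]
  exact div_neg_of_neg_of_pos (by linarith) (by positivity)

theorem stmt_7_general (r g lam α κ m θ₁ θ₂ a : ℝ)
    (hκ : 0 < κ) (ha : 0 < a)
    (hlam₁ : r - g < lam) (hlam₂ : lam < r - g + α / κ)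
    (hθ₁ : θ₁ > 1) (hθ₂ : θ₂ < 0) :
    G r g lam α κ m θ₁ θ₂ a a = κ ∧ 0 < κ ∧
    Tendsto (fun b => G r g lam α κ m θ₁ θ₂ a b) atTop atBot := by
  refine ⟨G_self r g lam α κ m ha.ne' (by linarith), hκ, ?_⟩
  have h_coeff : κ / (θ₁ - θ₂) - α / ((θ₁ - θ₂) * (lam - (r - g))) < 0 :=
    div_sub_div_mul_neg_of_mul_lt (by linarith) (by linarith) (by
      rw [mul_comm]; exact (lt_div_iff₀ hκ).mp (by linarith))
  obtain ⟨D, hD⟩ := exists_G_eq_of_lt r g lam α κ m θ₁ θ₂ a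
  have h_shape := (tendsto_const_mul_rpow_add_const_mul_rpow_atTop (p := 1 - θ₂) (1 - θ₂)
    (sub_pos.mpr hθ₁) (by linarith) (sub_neg.mpr hθ₁)).comp (tendsto_id.atTop_div_const ha)
  exact (tendsto_atBot_add_const_right _ D (h_shape.atTop_mul_const_of_neg h_coeff)).congr'
    ((eventually_gt_atTop m).mono fun b hb => (hD b hb).symm)

/-- G(a,a) = κ > 0 and lim_{b→∞} G(a,b) = -∞, provided
r-g < λ < r-g + α/κ. -/
theorem stmt_7 (σ r g lam α κ m θ₁ θ₂ a : ℝ) (hσ : 0 < σ)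
    (hα : 0 < α) (hκ : 0 < κ) (hm : 0 < m) (ha : 0 < a)
    (hlam₁ : r - g < lam) (hlam₂ : lam < r - g + α / κ)
    (hθ₁ : θ₁ > 1) (hθ₂ : θ₂ < 0)
    (hroot₁ : (1/2) * σ ^ 2 * θ₁ * (θ₁ - 1) + (r - g) * θ₁ - lam = 0)
    (hroot₂ : (1/2) * σ ^ 2 * θ₂ * (θ₂ - 1) + (r - g) * θ₂ - lam = 0) :
    G r g lam α κ m θ₁ θ₂ a a = κ ∧ 0 < κ ∧
    Tendsto (fun b => G r g lam α κ m θ₁ θ₂ a b) atTop atBot :=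
  stmt_7_general r g lam α κ m θ₁ θ₂ a hκ ha hlam₁ hlam₂ hθ₁ hθ₂
end

section
/- With G as defined and r-g < λ < r-g + α/κ, for fixed a > 0 the partial derivative in b satisfies ∂G/∂b(a,b) = [(b/a)^{1-θ₂} - (b/a)^{1-θ₁}]·((θ₁-1)(1-θ₂)/((θ₁-θ₂)(λ-(r-g))b))·[κ(λ-(r-g)) - α·1_{b>m}]; in particular ∂G/∂b(a,b) > 0 for a < b < max(a,m) and ∂G/∂b(a,b) < 0 for b > max(a,m). -/
open Real Filter

/-- The partial derivative ∂G/∂b. -/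
noncomputable def Gb (r g lam α κ m θ₁ θ₂ a b : ℝ) : ℝ :=
  ((b / a) ^ (1 - θ₂) - (b / a) ^ (1 - θ₁)) *
    ((θ₁ - 1) * (1 - θ₂) / ((θ₁ - θ₂) * (lam - (r - g)) * b)) *
    (κ * (lam - (r - g)) - (if m < b then α else 0))

/-
Away from the kink at m, G(a, ·) is locally `c · [(θ₁-1)(b/a)^{1-θ₂} + (1-θ₂)(b/a)^{1-θ₁}] + k`
with constants c, k, so its derivative is `c (θ₁-1)(1-θ₂) [(b/a)^{1-θ₂} - (b/a)^{1-θ₁}] / b`.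
For b > a the bracket is positive because 1 - θ₁ < 0 < 1 - θ₂, so the sign of ∂G/∂b is that of
κ(λ-(r-g)) - α·1_{b>m}: positive below m and negative above it, as κ(λ-(r-g)) < α.
-/

lemma hasDerivAt_div_rpow {a : ℝ} (p : ℝ) (ha : 0 < a) {b : ℝ} (hb : 0 < b) :
    HasDerivAt (fun x : ℝ => (x / a) ^ p) (p * (b / a) ^ p / b) b := by
  have h := (hasDerivAt_rpow_const (p := p) (Or.inl (div_pos hb ha).ne')).comp b
    ((hasDerivAt_id b).div_const a)
  refine h.congr_deriv ?_
  rw [rpow_sub (div_pos hb ha), rpow_one]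
  field_simp

lemma hasDerivAt_rpow_combination (θ₁ θ₂ c k : ℝ) {a b : ℝ} (ha : 0 < a) (hb : 0 < b) :
    HasDerivAt (fun x : ℝ =>
        ((θ₁ - 1) * (x / a) ^ (1 - θ₂) + (1 - θ₂) * (x / a) ^ (1 - θ₁)) * c + k)
      (((b / a) ^ (1 - θ₂) - (b / a) ^ (1 - θ₁)) * ((θ₁ - 1) * (1 - θ₂) / b) * c) b := by
  have h := ((((hasDerivAt_div_rpow (1 - θ₂) ha hb).const_mul (θ₁ - 1)).add
    ((hasDerivAt_div_rpow (1 - θ₁) ha hb).const_mul (1 - θ₂))).mul_const c).add_const k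
  refine h.congr_deriv ?_
  field_simp
  ring

lemma eventually_le_iff_and_lt_iff {m b : ℝ} (h : b ≠ m) :
    ∀ᶠ x in nhds b, (m ≤ x ↔ m ≤ b) ∧ (m < x ↔ m < b) := by
  rcases h.lt_or_gt with h | h
  · filter_upwards [Iio_mem_nhds h] with x hx
    exact ⟨iff_of_false hx.not_ge h.not_ge, iff_of_false hx.not_gt h.not_gt⟩
  · filter_upwards [Ioi_mem_nhds h] with x hx
    exact ⟨iff_of_true hx.le h.le, iff_of_true hx h⟩

lemma G_eventuallyEq (r g lam α κ m θ₁ θ₂ a : ℝ) {b : ℝ} (h : b ≠ m) :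
    G r g lam α κ m θ₁ θ₂ a =ᶠ[nhds b] fun x =>
      ((θ₁ - 1) * (x / a) ^ (1 - θ₂) + (1 - θ₂) * (x / a) ^ (1 - θ₁)) *
        (κ / (θ₁ - θ₂) - (if m ≤ b then α else 0) / ((θ₁ - θ₂) * (lam - (r - g)))) +
      ((α / ((θ₁ - θ₂) * (lam - (r - g)))) *
          ((1 - θ₂) * (m / a) ^ (1 - θ₁) + (θ₁ - 1) * (m / a) ^ (1 - θ₂)) *
          (if a < m ∧ m < b then 1 else 0) +
        (α / (lam - (r - g))) * (if m ≤ a then 1 else 0)) := by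
  filter_upwards [eventually_le_iff_and_lt_iff h] with x ⟨hle, hlt⟩
  simp only [G, hle, hlt]
  ring

lemma hasDerivAt_G (r g lam α κ m θ₁ θ₂ : ℝ) {a b : ℝ} (ha : 0 < a) (hb : 0 < b)
    (hθ : θ₁ ≠ θ₂) (hlam : lam ≠ r - g) (hbm : b ≠ m) :
    HasDerivAt (G r g lam α κ m θ₁ θ₂ a) (Gb r g lam α κ m θ₁ θ₂ a b) b := by
  refine ((hasDerivAt_rpow_combination θ₁ θ₂ _ _ ha hb).congr_of_eventuallyEq
    (G_eventuallyEq r g lam α κ m θ₁ θ₂ a hbm)).congr_deriv ?_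
  have hite : (if m ≤ b then α else 0) = if m < b then α else 0 := by
    simp only [le_iff_lt_or_eq, hbm.symm, or_false]
  have hθ' : θ₁ - θ₂ ≠ 0 := sub_ne_zero.mpr hθ
  have hlam' : lam - (r - g) ≠ 0 := sub_ne_zero.mpr hlam
  rw [Gb, hite]
  field_simp

lemma Gb_prefactor_pos (r g lam θ₁ θ₂ : ℝ) {a b : ℝ} (ha : 0 < a) (hab : a < b)
    (hθ₁ : 1 < θ₁) (hθ₂ : θ₂ < 0) (hlam : r - g < lam) :
    0 < ((b / a) ^ (1 - θ₂) - (b / a) ^ (1 - θ₁)) *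
      ((θ₁ - 1) * (1 - θ₂) / ((θ₁ - θ₂) * (lam - (r - g)) * b)) := by
  have hb : 0 < b := ha.trans hab
  have hpow : (b / a) ^ (1 - θ₁) < (b / a) ^ (1 - θ₂) :=
    rpow_lt_rpow_of_exponent_lt ((one_lt_div ha).mpr hab) (by linarith)
  have hden : 0 < (θ₁ - θ₂) * (lam - (r - g)) * b := by
    have : 0 < θ₁ - θ₂ := by linarith
    have : 0 < lam - (r - g) := by linarith
    positivity
  exact mul_pos (sub_pos.mpr hpow) (div_pos (mul_pos (by linarith) (by linarith)) hden)

theorem stmt_8_general (r g lam α κ m θ₁ θ₂ a : ℝ)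
    (hκ : 0 < κ) (ha : 0 < a)
    (hlam₁ : r - g < lam) (hlam₂ : lam < r - g + α / κ)
    (hθ₁ : θ₁ > 1) (hθ₂ : θ₂ < 0) :
    (∀ b, a < b → b ≠ m →
      HasDerivAt (fun b' => G r g lam α κ m θ₁ θ₂ a b') (Gb r g lam α κ m θ₁ θ₂ a b) b) ∧
    (∀ b, a < b → b < max a m → 0 < Gb r g lam α κ m θ₁ θ₂ a b) ∧
    (∀ b, max a m < b → Gb r g lam α κ m θ₁ θ₂ a b < 0) := by
  refine ⟨fun b hab hbm => hasDerivAt_G r g lam α κ m θ₁ θ₂ ha (ha.trans hab)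
    (by linarith) hlam₁.ne' hbm, fun b hab hbmax => ?_, fun b hbmax => ?_⟩
  · have hbm : ¬ m < b := not_lt.mpr (lt_max_iff.mp hbmax |>.resolve_left hab.not_gt).le
    rw [Gb, if_neg hbm, sub_zero]
    exact mul_pos (Gb_prefactor_pos r g lam θ₁ θ₂ ha hab hθ₁ hθ₂ hlam₁)
      (mul_pos hκ (by linarith))
  · obtain ⟨hab, hbm⟩ := max_lt_iff.mp hbmax
    have hκlam : κ * (lam - (r - g)) < α := by
      rw [← lt_div_iff₀' hκ]
      linarith
    rw [Gb, if_pos hbm]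
    exact mul_neg_of_pos_of_neg (Gb_prefactor_pos r g lam θ₁ θ₂ ha hab hθ₁ hθ₂ hlam₁)
      (by linarith)

/-- the formula for ∂G/∂b and its sign: positive for a < b < max(a,m)
and negative for b > max(a,m). -/
theorem stmt_8 (σ r g lam α κ m θ₁ θ₂ a : ℝ) (hσ : 0 < σ)
    (hα : 0 < α) (hκ : 0 < κ) (hm : 0 < m) (ha : 0 < a)
    (hlam₁ : r - g < lam) (hlam₂ : lam < r - g + α / κ)
    (hθ₁ : θ₁ > 1) (hθ₂ : θ₂ < 0)
    (hroot₁ : (1/2) * σ ^ 2 * θ₁ * (θ₁ - 1) + (r - g) * θ₁ - lam = 0)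
    (hroot₂ : (1/2) * σ ^ 2 * θ₂ * (θ₂ - 1) + (r - g) * θ₂ - lam = 0) :
    (∀ b, a < b → b ≠ m →
      HasDerivAt (fun b' => G r g lam α κ m θ₁ θ₂ a b') (Gb r g lam α κ m θ₁ θ₂ a b) b) ∧
    (∀ b, a < b → b < max a m → 0 < Gb r g lam α κ m θ₁ θ₂ a b) ∧
    (∀ b, max a m < b → Gb r g lam α κ m θ₁ θ₂ a b < 0) :=
  stmt_8_general r g lam α κ m θ₁ θ₂ a hκ ha hlam₁ hlam₂ hθ₁ hθ₂
end

section
/- For every a > 0 there exists a unique b(a) ∈ (max(a,m), ∞) such that G(a, b(a)) = 0, and at this point ∂G/∂b(a, b(a)) < 0. -/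
/-!
For `b > max a m` every indicator in `G a b` is constant, so `b ↦ G a b` is
`C · φ(b / a) + D` with `φ(x) = (θ₁ - 1) x^{1-θ₂} + (1 - θ₂) x^{1-θ₁}` and constants `C, D`.
Since `φ' (x) = (θ₁ - 1)(1 - θ₂)(x^{-θ₂} - x^{-θ₁}) > 0` for `x > 1`, and
`C = (κ - α / (λ - (r - g))) / (θ₁ - θ₂) < 0` by the upper bound on `λ`, this branch is strictly
decreasing with negative derivative and tends to `-∞`. Its right limit at `max a m` is `κ` if
`m ≤ a` and `κ φ(m / a) / (θ₁ - θ₂) > 0` if `a < m`, so the intermediate value theorem gives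
exactly one zero.
-/

open Real Set Filter Topology

lemma exists_unique_zero_of_strictAntiOn {f : ℝ → ℝ} {c : ℝ} (hcont : ContinuousOn f (Ici c))
    (hanti : StrictAntiOn f (Ici c)) (hc : 0 < f c) (hlim : Tendsto f atTop atBot) :
    ∃ b, c < b ∧ f b = 0 ∧ ∀ b', c < b' → f b' = 0 → b' = b := by
  obtain ⟨T, hT, hcT⟩ := ((hlim.eventually (eventually_lt_atBot 0)).and
    (eventually_gt_atTop c)).exists
  obtain ⟨b, hb, hfb⟩ := intermediate_value_Ioo' hcT.le (hcont.mono Icc_subset_Ici_self)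
    ⟨hT, hc⟩
  exact ⟨b, hb.1, hfb, fun b' hb' hfb' => hanti.injOn hb'.le hb.1.le (hfb'.trans hfb.symm)⟩

noncomputable def rpowComb (θ₁ θ₂ x : ℝ) : ℝ :=
  (θ₁ - 1) * x ^ (1 - θ₂) + (1 - θ₂) * x ^ (1 - θ₁)

section rpowComb

variable {θ₁ θ₂ x : ℝ}

lemma rpowComb_one : rpowComb θ₁ θ₂ 1 = θ₁ - θ₂ := by
  simp only [rpowComb, one_rpow]
  ring

lemma rpowComb_pos (h₁ : 1 < θ₁) (h₂ : θ₂ < 1) (hx : 0 < x) : 0 < rpowComb θ₁ θ₂ x := by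
  have := rpow_pos_of_pos hx (1 - θ₂)
  have := rpow_pos_of_pos hx (1 - θ₁)
  have : 0 < θ₁ - 1 := sub_pos.2 h₁
  have : 0 < 1 - θ₂ := sub_pos.2 h₂
  unfold rpowComb
  positivity

lemma hasDerivAt_rpowComb (hx : 0 < x) :
    HasDerivAt (rpowComb θ₁ θ₂) ((θ₁ - 1) * (1 - θ₂) * (x ^ (-θ₂) - x ^ (-θ₁))) x := by
  have h₁ := (hasDerivAt_rpow_const (p := 1 - θ₂) (Or.inl hx.ne')).const_mul (θ₁ - 1)
  have h₂ := (hasDerivAt_rpow_const (p := 1 - θ₁) (Or.inl hx.ne')).const_mul (1 - θ₂)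
  refine (h₁.add h₂).congr_deriv ?_
  rw [show 1 - θ₂ - 1 = -θ₂ by ring, show 1 - θ₁ - 1 = -θ₁ by ring]
  ring

lemma deriv_rpowComb_pos (h₁ : 1 < θ₁) (h₂ : θ₂ < 1) (hx : 1 < x) :
    0 < deriv (rpowComb θ₁ θ₂) x := by
  rw [(hasDerivAt_rpowComb (zero_lt_one.trans hx)).deriv]
  have : x ^ (-θ₁) < x ^ (-θ₂) := (rpow_lt_rpow_left_iff hx).2 (by linarith)
  have : 0 < (θ₁ - 1) * (1 - θ₂) := mul_pos (sub_pos.2 h₁) (sub_pos.2 h₂)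
  exact mul_pos this (sub_pos.2 ‹_›)

lemma tendsto_rpowComb_atTop (h₁ : 1 < θ₁) (h₂ : θ₂ < 1) :
    Tendsto (rpowComb θ₁ θ₂) atTop atTop := by
  have hdom := (tendsto_rpow_atTop (sub_pos.2 h₂)).const_mul_atTop (sub_pos.2 h₁)
  have hdecay := (tendsto_rpow_neg_atTop (sub_pos.2 h₁)).const_mul (1 - θ₂)
  rw [neg_sub, mul_zero] at hdecay
  exact hdom.atTop_add hdecay

end rpowComb

noncomputable def GAbove (r g lam α κ m θ₁ θ₂ a b : ℝ) : ℝ :=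
  rpowComb θ₁ θ₂ (b / a) * (κ / (θ₁ - θ₂) - α / ((θ₁ - θ₂) * (lam - (r - g)))) +
    if a < m then α / ((θ₁ - θ₂) * (lam - (r - g))) * rpowComb θ₁ θ₂ (m / a)
    else α / (lam - (r - g))

section GAbove

variable {r g lam α κ m θ₁ θ₂ a b : ℝ}

lemma G_eq_GAbove (hb : max a m < b) :
    G r g lam α κ m θ₁ θ₂ a b = GAbove r g lam α κ m θ₁ θ₂ a b := by
  have hmb : m < b := (le_max_right a m).trans_lt hb
  by_cases ham : a < m
  · simp only [G, GAbove, rpowComb, if_pos hmb.le, if_pos ham, if_pos (And.intro ham hmb),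
      if_neg (not_le.2 ham)]
    ring
  · simp only [G, GAbove, rpowComb, if_pos hmb.le, if_neg ham, if_pos (not_lt.1 ham),
      if_neg fun h : a < m ∧ m < b => ham h.1]
    ring

lemma GAbove_coeff_neg (hκ : 0 < κ) (hθ : θ₂ < θ₁) (hlam₁ : r - g < lam)
    (hlam₂ : lam < r - g + α / κ) :
    κ / (θ₁ - θ₂) - α / ((θ₁ - θ₂) * (lam - (r - g))) < 0 := by
  have hL : 0 < lam - (r - g) := sub_pos.2 hlam₁
  have hκL : κ * (lam - (r - g)) < α := by
    have := (lt_div_iff₀ hκ).1 (by linarith : lam - (r - g) < α / κ)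
    linarith
  have : κ / (θ₁ - θ₂) - α / ((θ₁ - θ₂) * (lam - (r - g)))
      = (κ * (lam - (r - g)) - α) / ((θ₁ - θ₂) * (lam - (r - g))) := by
    field_simp
  rw [this]
  exact div_neg_of_neg_of_pos (by linarith) (mul_pos (sub_pos.2 hθ) hL)

lemma hasDerivAt_GAbove (ha : 0 < a) (hb : 0 < b) :
    HasDerivAt (GAbove r g lam α κ m θ₁ θ₂ a)
      (deriv (rpowComb θ₁ θ₂) (b / a) * (1 / a) *
        (κ / (θ₁ - θ₂) - α / ((θ₁ - θ₂) * (lam - (r - g))))) b := by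
  have hdiv : HasDerivAt (fun b : ℝ => b / a) (1 / a) b := by
    simpa using (hasDerivAt_id b).div_const a
  have hφ := (hasDerivAt_rpowComb (θ₁ := θ₁) (θ₂ := θ₂) (div_pos hb ha)).differentiableAt
  exact ((hφ.hasDerivAt.comp b hdiv).mul_const _).add_const _

lemma deriv_GAbove_neg (hκ : 0 < κ) (hlam₁ : r - g < lam) (hlam₂ : lam < r - g + α / κ)
    (hθ₁ : 1 < θ₁) (hθ₂ : θ₂ < 1) (ha : 0 < a) (hb : a < b) :
    deriv (GAbove r g lam α κ m θ₁ θ₂ a) b < 0 := by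
  rw [(hasDerivAt_GAbove ha (ha.trans hb)).deriv]
  refine mul_neg_of_pos_of_neg (mul_pos ?_ (one_div_pos.2 ha))
    (GAbove_coeff_neg hκ (by linarith) hlam₁ hlam₂)
  exact deriv_rpowComb_pos hθ₁ hθ₂ ((one_lt_div ha).2 hb)

lemma strictAntiOn_GAbove (hκ : 0 < κ) (hlam₁ : r - g < lam) (hlam₂ : lam < r - g + α / κ)
    (hθ₁ : 1 < θ₁) (hθ₂ : θ₂ < 1) (ha : 0 < a) :
    StrictAntiOn (GAbove r g lam α κ m θ₁ θ₂ a) (Ici a) := by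
  refine strictAntiOn_of_deriv_neg (convex_Ici a) (fun b hb => ?_) fun b hb => ?_
  · exact (hasDerivAt_GAbove ha (ha.trans_le hb)).continuousAt.continuousWithinAt
  · rw [interior_Ici] at hb
    exact deriv_GAbove_neg hκ hlam₁ hlam₂ hθ₁ hθ₂ ha hb

lemma GAbove_max_pos (hκ : 0 < κ) (hlam₁ : r - g < lam) (hθ₁ : 1 < θ₁) (hθ₂ : θ₂ < 1)
    (ha : 0 < a) : 0 < GAbove r g lam α κ m θ₁ θ₂ a (max a m) := by
  have hθ : 0 < θ₁ - θ₂ := by linarith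
  have hL : 0 < lam - (r - g) := sub_pos.2 hlam₁
  by_cases ham : a < m
  · have hφ := rpowComb_pos hθ₁ hθ₂ (div_pos (ha.trans ham) ha)
    have : GAbove r g lam α κ m θ₁ θ₂ a m = rpowComb θ₁ θ₂ (m / a) * (κ / (θ₁ - θ₂)) := by
      simp only [GAbove, if_pos ham]
      ring
    rw [max_eq_right ham.le, this]
    positivity
  · rw [max_eq_left (not_lt.1 ham)]
    simp only [GAbove, if_neg ham, div_self ha.ne', rpowComb_one]
    field_simp
    nlinarith [mul_pos hκ hL]

lemma tendsto_GAbove_atBot (hκ : 0 < κ) (hlam₁ : r - g < lam) (hlam₂ : lam < r - g + α / κ)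
    (hθ₁ : 1 < θ₁) (hθ₂ : θ₂ < 1) (ha : 0 < a) :
    Tendsto (GAbove r g lam α κ m θ₁ θ₂ a) atTop atBot :=
  tendsto_atBot_add_const_right atTop _ <|
    ((tendsto_rpowComb_atTop hθ₁ hθ₂).comp (tendsto_id.atTop_div_const ha)).atTop_mul_const_of_neg
      (GAbove_coeff_neg hκ (by linarith) hlam₁ hlam₂)

end GAbove

theorem stmt_9_general (r g lam α κ m θ₁ θ₂ a : ℝ)
    (hκ : 0 < κ) (ha : 0 < a)
    (hlam₁ : r - g < lam) (hlam₂ : lam < r - g + α / κ)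
    (hθ₁ : θ₁ > 1) (hθ₂ : θ₂ < 0) :
    ∃ b, max a m < b ∧ G r g lam α κ m θ₁ θ₂ a b = 0 ∧
      (∀ b', max a m < b' → G r g lam α κ m θ₁ θ₂ a b' = 0 → b' = b) ∧
      deriv (fun b' => G r g lam α κ m θ₁ θ₂ a b') b < 0 := by
  have hθ₂' : θ₂ < 1 := by linarith
  have hmax : a ≤ max a m := le_max_left a m
  obtain ⟨b, hb, hzero, huniq⟩ := exists_unique_zero_of_strictAntiOn
    (fun x hx =>
      (hasDerivAt_GAbove ha (ha.trans_le (hmax.trans hx))).continuousAt.continuousWithinAt)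
    ((strictAntiOn_GAbove hκ hlam₁ hlam₂ hθ₁ hθ₂' ha).mono (Ici_subset_Ici.2 hmax))
    (GAbove_max_pos hκ hlam₁ hθ₁ hθ₂' ha) (tendsto_GAbove_atBot hκ hlam₁ hlam₂ hθ₁ hθ₂' ha)
  have hG_eq : (fun b' => G r g lam α κ m θ₁ θ₂ a b') =ᶠ[𝓝 b] GAbove r g lam α κ m θ₁ θ₂ a :=
    eventually_of_mem (Ioi_mem_nhds hb) fun _ => G_eq_GAbove
  refine ⟨b, hb, (G_eq_GAbove hb).trans hzero,
    fun b' hb' hGb' => huniq b' hb' ((G_eq_GAbove hb').symm.trans hGb'), ?_⟩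
  rw [hG_eq.deriv_eq]
  exact deriv_GAbove_neg hκ hlam₁ hlam₂ hθ₁ hθ₂' ha (hmax.trans_lt hb)

/-- for every a > 0 there exists a unique b(a) ∈ (max(a,m), ∞)
with G(a, b(a)) = 0, and at this point ∂G/∂b(a, b(a)) < 0. -/
theorem stmt_9 (σ r g lam α κ m θ₁ θ₂ a : ℝ) (hσ : 0 < σ)
    (hα : 0 < α) (hκ : 0 < κ) (hm : 0 < m) (ha : 0 < a)
    (hlam₁ : r - g < lam) (hlam₂ : lam < r - g + α / κ)
    (hθ₁ : θ₁ > 1) (hθ₂ : θ₂ < 0)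
    (hroot₁ : (1/2) * σ ^ 2 * θ₁ * (θ₁ - 1) + (r - g) * θ₁ - lam = 0)
    (hroot₂ : (1/2) * σ ^ 2 * θ₂ * (θ₂ - 1) + (r - g) * θ₂ - lam = 0) :
    ∃ b, max a m < b ∧ G r g lam α κ m θ₁ θ₂ a b = 0 ∧
      (∀ b', max a m < b' → G r g lam α κ m θ₁ θ₂ a b' = 0 → b' = b) ∧
      deriv (fun b' => G r g lam α κ m θ₁ θ₂ a b') b < 0 :=
  stmt_9_general r g lam α κ m θ₁ θ₂ a hκ ha hlam₁ hlam₂ hθ₁ hθ₂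
end

section
/- Under r-g < λ < r-g+α/κ, the equation (1-θ₂)(κ(λ-(r-g)) - α)q^{θ₁-1} + (θ₁-1)(κ(λ-(r-g)) - α)q^{θ₂-1} + α(θ₁-θ₂) = 0 admits a unique solution q̃ ∈ (0,1), where θ₁ > 1 and θ₂ < 0 are the roots of (1/2)σ²θ(θ-1)+(r-g)θ-λ = 0. -/
open Real Set Filter

/-- under r-g < λ < r-g+α/κ the equation
(1-θ₂)(κ(λ-(r-g))-α)q^{θ₁-1} + (θ₁-1)(κ(λ-(r-g))-α)q^{θ₂-1} + α(θ₁-θ₂) = 0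
admits a unique solution q̃ ∈ (0,1). -/
theorem stmt_11 (σ r g lam α κ θ₁ θ₂ : ℝ) (hσ : 0 < σ)
    (hα : 0 < α) (hκ : 0 < κ)
    (hlam₁ : r - g < lam) (hlam₂ : lam < r - g + α / κ)
    (hθ₁ : θ₁ > 1) (hθ₂ : θ₂ < 0)
    (hroot₁ : (1/2) * σ ^ 2 * θ₁ * (θ₁ - 1) + (r - g) * θ₁ - lam = 0)
    (hroot₂ : (1/2) * σ ^ 2 * θ₂ * (θ₂ - 1) + (r - g) * θ₂ - lam = 0) :
    ∃! q : ℝ, q ∈ Ioo (0 : ℝ) 1 ∧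
      (1 - θ₂) * (κ * (lam - (r - g)) - α) * q ^ (θ₁ - 1)
        + (θ₁ - 1) * (κ * (lam - (r - g)) - α) * q ^ (θ₂ - 1)
        + α * (θ₁ - θ₂) = 0 := by
  set c : ℝ := κ * (lam - (r - g)) - α with hcdef
  have hc : c < 0 := by
    have : κ * (lam - (r - g)) < κ * (α / κ) := by
      apply mul_lt_mul_of_pos_left _ hκ
      linarith
    rw [mul_div_cancel₀ _ hκ.ne'] at this
    linarith
  have hcα : 0 < c + α := by
    have : 0 < κ * (lam - (r - g)) := mul_pos hκ (by linarith)
    simp [hcdef]; linarith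
  set f : ℝ → ℝ := fun q => (1 - θ₂) * c * q ^ (θ₁ - 1)
        + (θ₁ - 1) * c * q ^ (θ₂ - 1) + α * (θ₁ - θ₂) with hf
  -- derivative
  have hderiv : ∀ x ∈ Ioo (0:ℝ) 1, HasDerivAt f
      ((1 - θ₂) * c * ((θ₁ - 1) * x ^ (θ₁ - 1 - 1))
        + (θ₁ - 1) * c * ((θ₂ - 1) * x ^ (θ₂ - 1 - 1))) x := by
    intro x hx
    have h1 := (Real.hasDerivAt_rpow_const (x := x) (p := θ₁ - 1) (Or.inl hx.1.ne')).const_mul ((1 - θ₂) * c)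
    have h2 := (Real.hasDerivAt_rpow_const (x := x) (p := θ₂ - 1) (Or.inl hx.1.ne')).const_mul ((θ₁ - 1) * c)
    simpa [hf] using (h1.add h2).add_const (α * (θ₁ - θ₂))
  have hmono : StrictMonoOn f (Ioo (0:ℝ) 1) := by
    apply strictMonoOn_of_deriv_pos (convex_Ioo 0 1)
    · exact fun x hx => ((hderiv x hx).continuousAt).continuousWithinAt
    · intro x hx
      rw [interior_Ioo] at hx
      rw [(hderiv x hx).deriv]
      have hlt : x ^ (θ₁ - 1 - 1) < x ^ (θ₂ - 1 - 1) :=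
        Real.rpow_lt_rpow_of_exponent_gt hx.1 hx.2 (by linarith)
      have h1 : 0 < (θ₁ - 1) * (1 - θ₂) := mul_pos (by linarith) (by linarith)
      have key : 0 < (θ₁ - 1) * (1 - θ₂) * (-c) * (x ^ (θ₂ - 1 - 1) - x ^ (θ₁ - 1 - 1)) :=
        mul_pos (mul_pos h1 (neg_pos.2 hc)) (sub_pos.2 hlt)
      nlinarith [key]
  -- value at 1
  have hf1 : f 1 = (θ₁ - θ₂) * (c + α) := by
    simp [hf]; ring
  have hf1pos : 0 < f 1 := by rw [hf1]; exact mul_pos (by linarith) hcα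
  -- f tends to -∞ at 0+
  have htend : Tendsto f (nhdsWithin 0 (Ioi (0:ℝ))) atBot := by
    have ht2 : Tendsto (fun x : ℝ => x ^ (θ₂ - 1)) (nhdsWithin 0 (Ioi (0:ℝ))) atTop := by
      have h := (tendsto_rpow_atTop (y := 1 - θ₂) (by linarith)).comp
        (tendsto_inv_nhdsGT_zero (𝕜 := ℝ))
      refine h.congr' ?_
      filter_upwards [self_mem_nhdsWithin] with x hx
      have hx' : (0:ℝ) < x := hx
      rw [Function.comp_apply, ← Real.rpow_neg_one x, ← Real.rpow_mul hx'.le]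
      ring_nf
    have ht2' : Tendsto (fun x : ℝ => (θ₁ - 1) * c * x ^ (θ₂ - 1))
        (nhdsWithin 0 (Ioi (0:ℝ))) atBot :=
      (tendsto_const_mul_atBot_of_neg (mul_neg_of_pos_of_neg (by linarith) hc)).2 ht2
    have ht1 : Tendsto (fun x : ℝ => (1 - θ₂) * c * x ^ (θ₁ - 1))
        (nhdsWithin 0 (Ioi (0:ℝ))) (nhds ((1 - θ₂) * c * (0:ℝ) ^ (θ₁ - 1))) := by
      apply Tendsto.const_mul
      apply Tendsto.mono_left _ nhdsWithin_le_nhds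
      exact (Real.continuousAt_rpow_const 0 (θ₁ - 1) (Or.inr (by linarith))).tendsto
    have ht2'' := tendsto_atBot_add_const_right _ (α * (θ₁ - θ₂)) ht2'
    have hsum := ht1.add_atBot ht2''
    simpa [hf, add_assoc, add_comm, add_left_comm] using hsum
  -- find a with f a < 0
  have hev : ∀ᶠ x in nhdsWithin 0 (Ioi (0:ℝ)), f x < 0 ∧ x ∈ Ioo (0:ℝ) 1 := by
    filter_upwards [htend.eventually (eventually_lt_atBot 0),
      Ioo_mem_nhdsGT_of_mem (by norm_num : (0:ℝ) ∈ Ico (0:ℝ) 1)] with x h1 h2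
    exact ⟨h1, h2⟩
  obtain ⟨a, hfa, ha⟩ := hev.exists
  -- continuity on [a,1]
  have hcont : ContinuousOn f (Icc a 1) := by
    intro x hx
    have hx0 : x ≠ 0 := by
      have := hx.1; have := ha.1; intro h; subst h; linarith
    apply ContinuousWithinAt.add
    apply ContinuousWithinAt.add
    · exact ((Real.continuousAt_rpow_const x _ (Or.inl hx0)).const_smul ((1 - θ₂) * c)).continuousWithinAt
    · exact ((Real.continuousAt_rpow_const x _ (Or.inl hx0)).const_smul ((θ₁ - 1) * c)).continuousWithinAt
    · exact continuousWithinAt_const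
  have hsub : Ioo a 1 ⊆ Ioo (0:ℝ) 1 := Ioo_subset_Ioo ha.1.le le_rfl
  have hivt := intermediate_value_Ioo ha.2.le hcont
  have h0mem : (0:ℝ) ∈ Ioo (f a) (f 1) := ⟨hfa, hf1pos⟩
  obtain ⟨q, hq, hfq⟩ := hivt h0mem
  refine ⟨q, ⟨hsub hq, by simpa [hf] using hfq⟩, ?_⟩
  rintro y ⟨hy, hfy⟩
  have hfy' : f y = 0 := by simpa [hf] using hfy
  exact hmono.injOn hy (hsub hq) (by rw [hfy', hfq])
end

section
/- Let θ₁ > 1, θ₂ < 0, α, κ > 0 and λ with r-g < λ < r-g+α/κ. Define Ĝ(q) = (1-θ₂)κ(λ-(r-g)) + (θ₁-1)(κ(λ-(r-g))-α)q^{θ₂-1} + α(θ₁-1) for q ∈ (0,1). Then Ĝ is strictly increasing on (0,1), Ĝ(q) → -∞ as q → 0+, Ĝ(1) = (θ₁-θ₂)κ(λ-(r-g)) > 0, and hence there is a unique q̂(λ) ∈ (0,1) with Ĝ(q̂(λ)) = 0, given explicitly by q̂(λ) = [(α - κ(λ-(r-g)))(θ₁-1) / ((1-θ₂)κ(λ-(r-g))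 + α(θ₁-1))]^{1/(1-θ₂)}. -/
open Real Set Filter

/-- The function Ĝ from the proof of Corollary 5.4. -/
noncomputable def Ghat (r g lam α κ θ₁ θ₂ q : ℝ) : ℝ :=
  (1 - θ₂) * κ * (lam - (r - g))
    + (θ₁ - 1) * (κ * (lam - (r - g)) - α) * q ^ (θ₂ - 1)
    + α * (θ₁ - 1)

/-!
Writing `c = κ(λ - (r - g))`, the hypotheses on `λ` say `0 < c < α`, and
`Ĝ(q) = B - N q^(θ₂-1)` with `B = (1-θ₂)c + α(θ₁-1) > N = (α-c)(θ₁-1) > 0`.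
Since `θ₂ - 1 < 0`, such a function is strictly increasing on `(0, ∞)` and tends to `-∞` at `0+`;
its zero solves `q^(θ₂-1) = B / N`, i.e. `q = (N / B)^(1/(1-θ₂))`, which lies in `(0, 1)`
because `N < B`.
-/

section SubMulRpow

variable {B N e : ℝ}

theorem strictMonoOn_sub_mul_rpow (hN : 0 < N) (he : e < 0) :
    StrictMonoOn (fun q : ℝ => B - N * q ^ e) (Ioi 0) := fun _ ha _ _ hab =>
  sub_lt_sub_left (mul_lt_mul_of_pos_left (rpow_lt_rpow_of_neg ha hab he) hN) B

theorem tendsto_sub_mul_rpow_nhdsGT_zero (hN : 0 < N) (he : e < 0) :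
    Tendsto (fun q : ℝ => B - N * q ^ e) (nhdsWithin 0 (Ioi 0)) atBot := by
  simpa only [sub_eq_add_neg, Function.comp_def] using tendsto_atBot_add_const_left _ B
    (tendsto_neg_atTop_atBot.comp ((tendsto_rpow_neg_nhdsGT_zero he).const_mul_atTop hN))

theorem rpow_one_div_neg_rpow {x : ℝ} (hx : 0 ≤ x) (he : e ≠ 0) : (x ^ (1 / -e)) ^ e = x⁻¹ := by
  rw [← rpow_mul hx, one_div, inv_neg, neg_mul, inv_mul_cancel₀ he, rpow_neg_one]

theorem sub_mul_rpow_root_eq_zero (hN : 0 < N) (hB : 0 < B) (he : e ≠ 0) :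
    B - N * ((N / B) ^ (1 / -e)) ^ e = 0 := by
  rw [rpow_one_div_neg_rpow (div_pos hN hB).le he, inv_div, mul_div_cancel₀ B hN.ne', sub_self]

theorem rpow_one_div_neg_mem_Ioo (hN : 0 < N) (hNB : N < B) (he : e < 0) :
    (N / B) ^ (1 / -e) ∈ Ioo 0 1 :=
  ⟨rpow_pos_of_pos (div_pos hN (hN.trans hNB)) _,
    rpow_lt_one (div_pos hN (hN.trans hNB)).le ((div_lt_one (hN.trans hNB)).2 hNB)
      (one_div_pos.2 (neg_pos.2 he))⟩

end SubMulRpow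

theorem Ghat_eq_sub_mul_rpow (r g lam α κ θ₁ θ₂ : ℝ) :
    Ghat r g lam α κ θ₁ θ₂ = fun q =>
      ((1 - θ₂) * κ * (lam - (r - g)) + α * (θ₁ - 1))
        - (α - κ * (lam - (r - g))) * (θ₁ - 1) * q ^ (θ₂ - 1) := by
  funext q
  unfold Ghat
  ring

theorem stmt_18_general (r g lam α κ θ₁ θ₂ : ℝ)
    (hκ : 0 < κ)
    (hlam₁ : r - g < lam) (hlam₂ : lam < r - g + α / κ)
    (hθ₁ : θ₁ > 1) (hθ₂ : θ₂ < 0) :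
    StrictMonoOn (Ghat r g lam α κ θ₁ θ₂) (Ioo 0 1) ∧
    Tendsto (Ghat r g lam α κ θ₁ θ₂) (nhdsWithin 0 (Ioi 0)) atBot ∧
    Ghat r g lam α κ θ₁ θ₂ 1 = (θ₁ - θ₂) * κ * (lam - (r - g)) ∧
    0 < (θ₁ - θ₂) * κ * (lam - (r - g)) ∧
    (((α - κ * (lam - (r - g))) * (θ₁ - 1)
        / ((1 - θ₂) * κ * (lam - (r - g)) + α * (θ₁ - 1))) ^ ((1 : ℝ) / (1 - θ₂))
      ∈ Ioo (0 : ℝ) 1) ∧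
    Ghat r g lam α κ θ₁ θ₂
      (((α - κ * (lam - (r - g))) * (θ₁ - 1)
        / ((1 - θ₂) * κ * (lam - (r - g)) + α * (θ₁ - 1))) ^ ((1 : ℝ) / (1 - θ₂))) = 0 ∧
    (∀ q ∈ Ioo (0 : ℝ) 1, Ghat r g lam α κ θ₁ θ₂ q = 0 →
      q = ((α - κ * (lam - (r - g))) * (θ₁ - 1)
        / ((1 - θ₂) * κ * (lam - (r - g)) + α * (θ₁ - 1))) ^ ((1 : ℝ) / (1 - θ₂))) := by
  have hc : 0 < κ * (lam - (r - g)) := mul_pos hκ (by linarith)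
  have hcα : κ * (lam - (r - g)) < α := by
    have := mul_lt_mul_of_pos_left (show lam - (r - g) < α / κ by linarith) hκ
    rwa [mul_div_cancel₀ α hκ.ne'] at this
  have he : θ₂ - 1 < 0 := by linarith
  have hN : 0 < (α - κ * (lam - (r - g))) * (θ₁ - 1) := mul_pos (by linarith) (by linarith)
  have hNB : (α - κ * (lam - (r - g))) * (θ₁ - 1)
      < (1 - θ₂) * κ * (lam - (r - g)) + α * (θ₁ - 1) := by nlinarith
  have hmono := (strictMonoOn_sub_mul_rpow (B := (1 - θ₂) * κ * (lam - (r - g)) + α * (θ₁ - 1))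
    hN he).mono (Ioo_subset_Ioi_self : Ioo (0 : ℝ) 1 ⊆ Ioi 0)
  have hroot := rpow_one_div_neg_mem_Ioo hN hNB he
  have hzero := sub_mul_rpow_root_eq_zero hN (hN.trans hNB) he.ne
  rw [neg_sub] at hroot hzero
  rw [Ghat_eq_sub_mul_rpow]
  refine ⟨hmono, tendsto_sub_mul_rpow_nhdsGT_zero hN he, by simp only [one_rpow]; ring,
    by nlinarith, hroot, hzero, fun q hq hq0 => hmono.injOn hq hroot (hq0.trans hzero.symm)⟩

/-- Ĝ is strictly increasing on (0,1), tends to -∞ as q → 0+,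
Ĝ(1) = (θ₁-θ₂)κ(λ-(r-g)) > 0, and the explicit
q̂(λ) = [(α-κ(λ-(r-g)))(θ₁-1)/((1-θ₂)κ(λ-(r-g)) + α(θ₁-1))]^{1/(1-θ₂)}
is the unique zero of Ĝ in (0,1). -/
theorem stmt_18 (r g lam α κ θ₁ θ₂ : ℝ)
    (hα : 0 < α) (hκ : 0 < κ)
    (hlam₁ : r - g < lam) (hlam₂ : lam < r - g + α / κ)
    (hθ₁ : θ₁ > 1) (hθ₂ : θ₂ < 0) :
    StrictMonoOn (Ghat r g lam α κ θ₁ θ₂) (Ioo 0 1) ∧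
    Tendsto (Ghat r g lam α κ θ₁ θ₂) (nhdsWithin 0 (Ioi 0)) atBot ∧
    Ghat r g lam α κ θ₁ θ₂ 1 = (θ₁ - θ₂) * κ * (lam - (r - g)) ∧
    0 < (θ₁ - θ₂) * κ * (lam - (r - g)) ∧
    (((α - κ * (lam - (r - g))) * (θ₁ - 1)
        / ((1 - θ₂) * κ * (lam - (r - g)) + α * (θ₁ - 1))) ^ ((1 : ℝ) / (1 - θ₂))
      ∈ Ioo (0 : ℝ) 1) ∧
    Ghat r g lam α κ θ₁ θ₂
      (((α - κ * (lam - (r - g))) * (θ₁ - 1)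
        / ((1 - θ₂) * κ * (lam - (r - g)) + α * (θ₁ - 1))) ^ ((1 : ℝ) / (1 - θ₂))) = 0 ∧
    (∀ q ∈ Ioo (0 : ℝ) 1, Ghat r g lam α κ θ₁ θ₂ q = 0 →
      q = ((α - κ * (lam - (r - g))) * (θ₁ - 1)
        / ((1 - θ₂) * κ * (lam - (r - g)) + α * (θ₁ - 1))) ^ ((1 : ℝ) / (1 - θ₂))) :=
  stmt_18_general r g lam α κ θ₁ θ₂ hκ hlam₁ hlam₂ hθ₁ hθ₂
end
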